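/- arXiv:2411.09501 — 2 statements merged into one kernel-verified Lean document; each statement's English description precedes it below -/
import Mathlib

section
/- If G is a transitive digraph (for all u,v,w: u→v and v→w imply u→w), then for every vertex v, every connected v-proper upper face multihypergraph consists of a single vertex and has no hyperedges. Equivalently: for x ∈ Ω_n(G;R) in a transitive digraph, if every head vertex of x has an edge to v, then [x]^v ∈ Ω_{n+1}(G;R) already holds without any cancellation conditions, since every u ∈ h̄(δ^h_n(x)) satisfies (u,v) ∈ E_G or u = v. -/
open Finsupp

/-- `p` is an allowed `d`-path in the digraph `(V, E)`: consecutive vertices are joined by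
edges. -/
def IsAllowed (V : Type) (E : V → V → Prop) (d : ℕ) (p : Fin (d+1) → V) : Prop :=
  ∀ i : Fin d, E (p i.castSucc) (p i.succ)

/-- An allowed path condition for tuples of length `d` (i.e. `(d-1)`-paths). -/
def IsAllowedLow (V : Type) (E : V → V → Prop) (d : ℕ) (q : Fin d → V) : Prop :=
  ∀ j : Fin (d-1), E (q ⟨j.val, by have := j.isLt; omega⟩) (q ⟨j.val+1, by have := j.isLt; omega⟩)

/-- Regularity (no repeated consecutive vertices) for tuples of length `d`. -/
def IsRegularLow (V : Type) (d : ℕ) (q : Fin d → V) : Prop :=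
  ∀ j : Fin (d-1), q ⟨j.val, by have := j.isLt; omega⟩ ≠ q ⟨j.val+1, by have := j.isLt; omega⟩

open Classical in
/-- The path differential `∂^P_d` on the regular path complex: the alternating sum of the
face maps deleting the `i`-th vertex, where a face is declared zero if the resulting path
is irregular. -/
noncomputable def pathBoundary (V : Type) (R : Type) [CommRing R] (d : ℕ) :
    ((Fin (d+1) → V) →₀ R) →ₗ[R] ((Fin d → V) →₀ R) :=
  ∑ i : Fin (d+1), ((-1 : R)^(i : ℕ)) •
    ((Finsupp.lsum R fun p : Fin (d+1) → V =>
      if IsRegularLow V d (p ∘ i.succAbove) then Finsupp.lsingle (p ∘ i.succAbove)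
      else (0 : R →ₗ[R] ((Fin d → V) →₀ R))) : ((Fin (d+1) → V) →₀ R) →ₗ[R] ((Fin d → V) →₀ R))

/-- The path chain module `Ω_d(G;R)`: allowed `d`-chains whose path boundary is again an
allowed chain. -/
noncomputable def Omega (V : Type) (E : V → V → Prop) (R : Type) [CommRing R] (d : ℕ) :
    Submodule R ((Fin (d+1) → V) →₀ R) :=
  Finsupp.supported R R {p | IsAllowed V E d p} ⊓
    Submodule.comap (pathBoundary V R d) (Finsupp.supported R R {q | IsAllowedLow V E d q})

open Classical in
/-- The upper extension `[x]^v`: append the vertex `v` to each path whose last vertex has an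
edge to `v`; the remaining terms are discarded. -/
noncomputable def upperExt (V : Type) (E : V → V → Prop) (R : Type) [CommRing R]
    (v : V) (d : ℕ) :
    ((Fin (d+1) → V) →₀ R) →ₗ[R] ((Fin (d+2) → V) →₀ R) :=
  Finsupp.lsum R fun p : Fin (d+1) → V =>
    if E (p (Fin.last d)) v then Finsupp.lsingle (Fin.snoc p v)
    else (0 : R →ₗ[R] ((Fin (d+2) → V) →₀ R))

open Classical in
/-- The lower extension `[x]_v`: prepend the vertex `v` to each path whose first vertex is
the target of an edge from `v`; the remaining terms are discarded. -/
noncomputable def lowerExt (V : Type) (E : V → V → Prop) (R : Type) [CommRing R]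
    (v : V) (d : ℕ) :
    ((Fin (d+1) → V) →₀ R) →ₗ[R] ((Fin (d+2) → V) →₀ R) :=
  Finsupp.lsum R fun p : Fin (d+1) → V =>
    if E v (p 0) then Finsupp.lsingle (Fin.cons v p)
    else (0 : R →ₗ[R] ((Fin (d+2) → V) →₀ R))

/-- The full head face map `δ^h_d` (truncation of the last vertex). -/
noncomputable def headFace (V : Type) (R : Type) [CommRing R] (d : ℕ) :
    ((Fin (d+1) → V) →₀ R) →ₗ[R] ((Fin d → V) →₀ R) :=
  Finsupp.lmapDomain R R (fun p : Fin (d+1) → V => fun j : Fin d => p j.castSucc)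

section Helpers
variable {V : Type} {E : V → V → Prop}

lemma snoc_comp_succAbove {d : ℕ} (p : Fin (d+1) → V) (v : V) (i : Fin (d+1)) :
    (Fin.snoc p v : Fin (d+2) → V) ∘ (Fin.castSucc i).succAbove
      = Fin.snoc (p ∘ i.succAbove) v := by
  funext j
  refine Fin.lastCases ?_ (fun k => ?_) j
  · rw [Function.comp_apply, Fin.succAbove_of_le_castSucc _ _ (by
      simpa using Fin.le_last i)]
    simp
  · rw [Function.comp_apply, Fin.castSucc_succAbove_castSucc]
    simp

lemma snoc_comp_succAbove_last {d : ℕ} (p : Fin (d+1) → V) (v : V) :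
    (Fin.snoc p v : Fin (d+2) → V) ∘ (Fin.last (d+1)).succAbove = p := by
  funext j
  rw [Function.comp_apply, Fin.succAbove_last, Fin.snoc_castSucc]

lemma snoc_mk_lt {d : ℕ} (p : Fin (d+1) → V) (v : V) {k : ℕ} (hk : k < d+1) (hk2 : k < d+2) :
    (Fin.snoc p v : Fin (d+2) → V) ⟨k, hk2⟩ = p ⟨k, hk⟩ := by
  have : (⟨k, hk2⟩ : Fin (d+2)) = Fin.castSucc ⟨k, hk⟩ := rfl
  rw [this, Fin.snoc_castSucc]

lemma snoc_mk_last {d : ℕ} (p : Fin (d+1) → V) (v : V) (h : d+1 < d+2) :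
    (Fin.snoc p v : Fin (d+2) → V) ⟨d+1, h⟩ = v := by
  have : (⟨d+1, h⟩ : Fin (d+2)) = Fin.last (d+1) := rfl
  rw [this, Fin.snoc_last]

lemma isRegularLow_snoc {d : ℕ} (p : Fin (d+1) → V) (v : V) (hlast : p (Fin.last d) ≠ v) :
    IsRegularLow V (d+2) (Fin.snoc p v) ↔ IsRegularLow V (d+1) p := by
  constructor
  · intro h j
    have hj : (j : ℕ) < d := by have := j.isLt; omega
    have := h ⟨j.val, by omega⟩
    rw [snoc_mk_lt p v (show (j:ℕ) < d+1 by omega),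
        snoc_mk_lt p v (show (j:ℕ)+1 < d+1 by omega)] at this
    exact this
  · intro h j
    have hj : (j : ℕ) < d + 1 := by have := j.isLt; omega
    rcases Nat.lt_or_ge j.val d with hjd | hjd
    · have := h ⟨j.val, by omega⟩
      rw [snoc_mk_lt p v (show (j:ℕ) < d+1 by omega),
          snoc_mk_lt p v (show (j:ℕ)+1 < d+1 by omega)]
      exact this
    · have hj' : (j : ℕ) = d := by omega
      have h1 : (⟨j.val, by omega⟩ : Fin (d+2)) = Fin.castSucc (Fin.last d) := by
        apply Fin.ext; simpa using hj'
      have h2 : (⟨j.val+1, by omega⟩ : Fin (d+2)) = Fin.last (d+1) := by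
        apply Fin.ext; simpa using hj'
      rw [h1, h2, Fin.snoc_castSucc, Fin.snoc_last]
      exact hlast

lemma isAllowed_snoc {d : ℕ} {p : Fin (d+1) → V} {v : V}
    (hp : IsAllowed V E d p) (hv : E (p (Fin.last d)) v) :
    IsAllowed V E (d+1) (Fin.snoc p v) := by
  intro i
  refine Fin.lastCases ?_ (fun k => ?_) i
  · rw [Fin.succ_last, Fin.snoc_last, Fin.snoc_castSucc]
    exact hv
  · rw [Fin.succ_castSucc, Fin.snoc_castSucc, Fin.snoc_castSucc]
    exact hp k

lemma isAllowedLow_snoc {d : ℕ} {q : Fin (d+1) → V} {v : V}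
    (hq : IsAllowedLow V E (d+1) q) (hv : E (q (Fin.last d)) v) :
    IsAllowedLow V E (d+2) (Fin.snoc q v) := by
  intro j
  have hj : (j : ℕ) < d + 1 := by have := j.isLt; omega
  rcases Nat.lt_or_ge j.val d with hjd | hjd
  · have := hq ⟨j.val, by omega⟩
    rw [snoc_mk_lt q v (show (j:ℕ) < d+1 by omega),
        snoc_mk_lt q v (show (j:ℕ)+1 < d+1 by omega)]
    exact this
  · have hj' : (j : ℕ) = d := by omega
    have h1 : (⟨j.val, by omega⟩ : Fin (d+2)) = Fin.castSucc (Fin.last d) := by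
      apply Fin.ext; simpa using hj'
    have h2 : (⟨j.val+1, by omega⟩ : Fin (d+2)) = Fin.last (d+1) := by
      apply Fin.ext; simpa using hj'
    rw [h1, h2, Fin.snoc_castSucc, Fin.snoc_last]
    exact hv

lemma isAllowed_isAllowedLow {d : ℕ} {p : Fin (d+1) → V}
    (hp : IsAllowed V E d p) : IsAllowedLow V E (d+1) p := by
  intro j
  have hj : (j : ℕ) < d := by have := j.isLt; omega
  have := hp ⟨j.val, hj⟩
  have h1 : (⟨j.val, by omega⟩ : Fin (d+1)) = Fin.castSucc ⟨j.val, hj⟩ := rfl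
  have h2 : (⟨j.val+1, by omega⟩ : Fin (d+1)) = Fin.succ ⟨j.val, hj⟩ := rfl
  rw [h1, h2]
  exact this

lemma isRegularLow_of_allowed (hirr : ∀ a b, E a b → a ≠ b) {d : ℕ} {p : Fin (d+1) → V}
    (hp : IsAllowed V E d p) : IsRegularLow V (d+1) p := by
  intro j
  exact hirr _ _ (isAllowed_isAllowedLow hp j)

/-- The last vertex of any upper face of `p` still has an edge to `v`. -/
lemma face_last_edge (htrans : ∀ u v w : V, E u v → E v w → E u w)
    {d : ℕ} {p : Fin (d+2) → V} {v : V}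
    (hp : IsAllowed V E (d+1) p) (hpv : E (p (Fin.last (d+1))) v) (i : Fin (d+2)) :
    E ((p ∘ i.succAbove) (Fin.last d)) v := by
  rcases eq_or_ne i (Fin.last (d+1)) with rfl | hi
  · rw [Function.comp_apply, Fin.succAbove_last]
    have := hp (Fin.last d)
    rw [Fin.succ_last] at this
    exact htrans _ _ _ this hpv
  · rw [Function.comp_apply, Fin.succAbove_of_le_castSucc _ _ ?_, Fin.succ_last]
    · exact hpv
    · have h1 : (i : ℕ) < d + 1 := by
        rcases Nat.lt_or_ge (i : ℕ) (d+1) with h | h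
        · exact h
        · exact absurd (Fin.ext (by have := i.isLt; omega : (i:ℕ) = d+1)) hi
      exact Fin.le_def.mpr (by simpa using Nat.lt_succ_iff.mp h1)
end Helpers
open Classical in
lemma pathBoundary_single {V : Type} {R : Type} [CommRing R] {d : ℕ}
    (p : Fin (d+1) → V) (r : R) :
    pathBoundary V R d (Finsupp.single p r) =
      ∑ i : Fin (d+1), ((-1 : R)^(i : ℕ)) •
        (if IsRegularLow V d (p ∘ i.succAbove) then Finsupp.single (p ∘ i.succAbove) r
         else 0) := by
  rw [pathBoundary]
  simp only [LinearMap.sum_apply, LinearMap.smul_apply, Finsupp.lsum_single]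
  refine Finset.sum_congr rfl fun i _ => ?_
  congr 1
  split
  · rw [Finsupp.lsingle_apply]
  · rfl

open Classical in
lemma upperExt_single {V : Type} {E : V → V → Prop} {R : Type} [CommRing R] {d : ℕ}
    (v : V) (p : Fin (d+1) → V) (r : R) (h : E (p (Fin.last d)) v) :
    upperExt V E R v d (Finsupp.single p r) = Finsupp.single (Fin.snoc p v) r := by
  rw [upperExt, Finsupp.lsum_single, if_pos h, Finsupp.lsingle_apply]
open Classical in
lemma boundary_upper_single {V : Type} {E : V → V → Prop}
    (hirr : ∀ a b, E a b → a ≠ b) (htrans : ∀ u v w, E u v → E v w → E u w)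
    {R : Type} [CommRing R] {d : ℕ} (v : V)
    (p : Fin (d+2) → V) (hp : IsAllowed V E (d+1) p) (hpv : E (p (Fin.last (d+1))) v)
    (r : R) :
    pathBoundary V R (d+2) (Finsupp.single (Fin.snoc p v) r) =
      upperExt V E R v d (pathBoundary V R (d+1) (Finsupp.single p r))
        + (-1:R)^(d+2) • Finsupp.single p r := by
  rw [pathBoundary_single, pathBoundary_single, map_sum, Fin.sum_univ_castSucc]
  congr 1
  · refine Finset.sum_congr rfl fun i _ => ?_
    rw [map_smul, Fin.coe_castSucc, snoc_comp_succAbove]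
    congr 1
    have hface : E ((p ∘ i.succAbove) (Fin.last d)) v := face_last_edge htrans hp hpv i
    rw [isRegularLow_snoc _ _ (hirr _ _ hface)]
    split
    · rw [upperExt_single v _ r hface]
    · rw [map_zero]
  · rw [snoc_comp_succAbove_last, Fin.val_last,
      if_pos (isRegularLow_of_allowed hirr hp)]
lemma upperExt_eq_sum {V : Type} {E : V → V → Prop} {R : Type} [CommRing R] {d : ℕ}
    (v : V) (x : (Fin (d+1) → V) →₀ R)
    (hhead : ∀ p ∈ x.support, E (p (Fin.last d)) v) :
    upperExt V E R v d x = ∑ p ∈ x.support, Finsupp.single (Fin.snoc p v) (x p) := by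
  conv_lhs => rw [← Finsupp.sum_single x, Finsupp.sum, map_sum]
  exact Finset.sum_congr rfl fun p hp => upperExt_single v p (x p) (hhead p hp)

lemma boundary_upperExt {V : Type} {E : V → V → Prop}
    (hirr : ∀ a b, E a b → a ≠ b) (htrans : ∀ u v w, E u v → E v w → E u w)
    {R : Type} [CommRing R] {d : ℕ} (v : V)
    (x : (Fin (d+2) → V) →₀ R)
    (hall : ∀ p ∈ x.support, IsAllowed V E (d+1) p)
    (hhead : ∀ p ∈ x.support, E (p (Fin.last (d+1))) v) :
    pathBoundary V R (d+2) (upperExt V E R v (d+1) x) =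
      upperExt V E R v d (pathBoundary V R (d+1) x) + (-1:R)^(d+2) • x := by
  rw [upperExt_eq_sum v x hhead, map_sum]
  conv_rhs => rw [← Finsupp.sum_single x, Finsupp.sum, map_sum, map_sum,
    Finset.smul_sum, ← Finset.sum_add_distrib]
  exact Finset.sum_congr rfl fun p hp =>
    boundary_upper_single hirr htrans v p (hall p hp) (hhead p hp) (x p)

open Classical in
lemma upperExt_supported {V : Type} {E : V → V → Prop} {R : Type} [CommRing R] {d : ℕ}
    (v : V) (y : (Fin (d+1) → V) →₀ R)
    (hy : y ∈ Finsupp.supported R R {q | IsAllowedLow V E (d+1) q}) :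
    upperExt V E R v d y ∈ Finsupp.supported R R {q | IsAllowedLow V E (d+2) q} := by
  rw [Finsupp.mem_supported] at hy ⊢
  rw [upperExt]
  refine Set.Subset.trans (Finset.coe_subset.mpr (Finsupp.support_sum)) ?_
  intro q hq
  simp only [Finset.coe_biUnion, Set.mem_iUnion, Finset.mem_coe] at hq
  obtain ⟨p, hp, hq⟩ := hq
  by_cases h : E (p (Fin.last d)) v
  · rw [if_pos h, Finsupp.lsingle_apply] at hq
    have := Finsupp.support_single_subset hq
    simp only [Finset.mem_singleton] at this
    subst this
    exact isAllowedLow_snoc (hy hp) h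
  · rw [if_neg h] at hq
    simp at hq

/-- In a transitive digraph, for `x ∈ Ω_{n+1}(G;R)` such that every head
vertex of `x` has an edge to `v`, every `u ∈ h̄(δ^h(x))` satisfies `(u,v) ∈ E` or `u = v`,
and the upper extension `[x]^v` lies in `Ω_{n+2}(G;R)` without any cancellation
conditions (i.e. every connected `v`-proper upper face multihypergraph is a single
vertex with no hyperedges). -/
theorem transitive_upperExt_mem_Omega (V : Type) (E : V → V → Prop)
    (hirr : ∀ a b, E a b → a ≠ b)
    (htrans : ∀ u v w : V, E u v → E v w → E u w)
    (R : Type) [CommRing R] (n : ℕ) (v : V)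
    (x : (Fin (n+2) → V) →₀ R) (hx : x ∈ Omega V E R (n+1))
    (hhead : ∀ p ∈ x.support, E (p (Fin.last (n+1))) v) :
    (∀ u : V, (∃ q ∈ (headFace V R (n+1) x).support, q (Fin.last n) = u) →
      E u v ∨ u = v) ∧
    upperExt V E R v (n+1) x ∈ Omega V E R (n+2) := by
  classical
  rw [Omega, Submodule.mem_inf] at hx
  obtain ⟨hx1, hx2⟩ := hx
  rw [Submodule.mem_comap] at hx2
  rw [Finsupp.mem_supported] at hx1
  have hall : ∀ p ∈ x.support, IsAllowed V E (n+1) p := fun p hp => hx1 hp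
  constructor
  · rintro u ⟨q, hq, rfl⟩
    rw [headFace, Finsupp.lmapDomain_apply] at hq
    obtain ⟨p, hp, rfl⟩ := Finset.mem_image.mp (Finsupp.mapDomain_support hq)
    have h1 := hall p hp (Fin.last n)
    rw [Fin.succ_last] at h1
    exact Or.inl (htrans _ _ _ h1 (hhead p hp))
  · rw [Omega, Submodule.mem_inf]
    constructor
    · rw [Finsupp.mem_supported, upperExt_eq_sum v x hhead]
      refine Set.Subset.trans (Finset.coe_subset.mpr Finsupp.support_finset_sum) ?_
      intro q hq
      simp only [Finset.coe_biUnion, Set.mem_iUnion, Finset.mem_coe] at hq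
      obtain ⟨p, hp, hq⟩ := hq
      have := Finsupp.support_single_subset hq
      simp only [Finset.mem_singleton] at this
      subst this
      exact isAllowed_snoc (hall p hp) (hhead p hp)
    · rw [Submodule.mem_comap, boundary_upperExt hirr htrans v x hall hhead]
      refine add_mem ?_ (Submodule.smul_mem _ _ ?_)
      · exact upperExt_supported v _ hx2
      · exact Finsupp.supported_mono (fun p hp => isAllowed_isAllowedLow hp)
          ((Finsupp.mem_supported R x).mpr hx1)
end

section
/- Let p be a prime and G a digraph containing vertices u, v_1, …, v_p, w with edges u→v_i and v_i→w for all i, and no edge u→w. Then the sum e_{u,v_1,w} + e_{u,v_2,w} + ⋯ + e_{u,v_p,w} is an element of Ω_2(G;ℤ_p), but the corresponding integral chain e_{u,v_1,w} + ⋯ + e_{u,v_p,w} is not an element of Ω_2(G;ℤ). -/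
open Finsupp

lemma reg2 (V : Type) (a b : V) (h : a ≠ b) : IsRegularLow V 2 ![a,b] := by
  intro j; fin_cases j; simpa using h

lemma boundary2_single (V R : Type) [CommRing R] (a b c : V)
    (hab : a≠b) (hbc : b≠c) (hac : a≠c) (r : R) :
    pathBoundary V R 2 (single ![a,b,c] r) =
      single ![b,c] r - single ![a,c] r + single ![a,b] r := by
  have h0 : (![a,b,c] ∘ (0:Fin 3).succAbove) = ![b,c] := by funext j; fin_cases j <;> rfl
  have h1 : (![a,b,c] ∘ (1:Fin 3).succAbove) = ![a,c] := by funext j; fin_cases j <;> rfl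
  have h2 : (![a,b,c] ∘ (2:Fin 3).succAbove) = ![a,b] := by funext j; fin_cases j <;> rfl
  have c0 : IsRegularLow V 2 (![a,b,c] ∘ (0:Fin 3).succAbove) := h0 ▸ reg2 V b c hbc
  have c1 : IsRegularLow V 2 (![a,b,c] ∘ (1:Fin 3).succAbove) := h1 ▸ reg2 V a c hac
  have c2 : IsRegularLow V 2 (![a,b,c] ∘ (2:Fin 3).succAbove) := h2 ▸ reg2 V a b hab
  rw [pathBoundary]
  simp only [LinearMap.sum_apply, LinearMap.smul_apply, lsum_single]
  rw [Fin.sum_univ_three, if_pos c0, if_pos c1, if_pos c2]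
  simp only [h0, h1, h2, lsingle_apply, Fin.val_zero, Fin.val_one, Fin.val_two,
    pow_zero, pow_one, one_smul, neg_smul, neg_one_sq]
  abel

lemma allowed2 (V : Type) (E : V → V → Prop) (a b c : V) (h1 : E a b) (h2 : E b c) :
    IsAllowed V E 2 ![a,b,c] := by
  intro j; fin_cases j
  · simpa using h1
  · simpa using h2

lemma allowedLow2 (V : Type) (E : V → V → Prop) (a b : V) (h : E a b) :
    IsAllowedLow V E 2 ![a,b] := by
  intro j; fin_cases j; simpa using h

lemma pair_ne_left {V : Type} {a b c d : V} (h : a ≠ c) : ![a,b] ≠ ![c,d] :=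
  fun he => h (congrFun he 0)

lemma pair_ne_right {V : Type} {a b c d : V} (h : b ≠ d) : ![a,b] ≠ ![c,d] :=
  fun he => h (congrFun he 1)

/-- For a prime `p` and a digraph containing a "`p`-fold multisquare"
`u → v_i → w` (`i = 1, …, p`, no edge `u → w`), the sum `Σ_i e_{u,v_i,w}` lies in
`Ω_2(G;ℤ_p)`, but the corresponding integral chain does not lie in `Ω_2(G;ℤ)`. -/
theorem multisquare_sum_mem_mod_p_not_int (V : Type) (E : V → V → Prop)
    (hirr : ∀ a b, E a b → a ≠ b) (p : ℕ) (hp : p.Prime)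
    (u w : V) (v : Fin p → V) (hv : Function.Injective v)
    (h1 : ∀ i, E u (v i)) (h2 : ∀ i, E (v i) w) (huw : ¬ E u w) (hneq : u ≠ w) :
    (∑ i : Fin p, Finsupp.single ![u, v i, w] (1 : ZMod p)) ∈ Omega V E (ZMod p) 2 ∧
    ¬ ((∑ i : Fin p, Finsupp.single ![u, v i, w] (1 : ℤ)) ∈ Omega V E ℤ 2) := by
  have huv : ∀ i, u ≠ v i := fun i => hirr _ _ (h1 i)
  have hvw : ∀ i, v i ≠ w := fun i => hirr _ _ (h2 i)
  haveI : NeZero p := ⟨hp.ne_zero⟩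
  constructor
  · constructor
    · exact Submodule.sum_mem _ fun i _ =>
        Finsupp.single_mem_supported _ _ (allowed2 V E u (v i) w (h1 i) (h2 i))
    · refine Submodule.mem_comap.2 ?_
      rw [map_sum]
      have key : ∀ i : Fin p, pathBoundary V (ZMod p) 2 (single ![u, v i, w] 1) =
          single ![v i, w] 1 - single ![u, w] 1 + single ![u, v i] 1 :=
        fun i => boundary2_single V (ZMod p) u (v i) w (huv i) (hvw i) hneq 1
      simp only [key]
      rw [Finset.sum_add_distrib, Finset.sum_sub_distrib]
      have hz : (∑ _i : Fin p, single ![u,w] (1 : ZMod p)) = 0 := by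
        rw [Finset.sum_const]
        simp [Finsupp.smul_single, ZMod.natCast_self]
      rw [hz, sub_zero]
      refine Submodule.add_mem _ ?_ ?_ <;>
        exact Submodule.sum_mem _ fun i _ =>
          Finsupp.single_mem_supported _ _ (by first
            | exact allowedLow2 V E (v i) w (h2 i)
            | exact allowedLow2 V E u (v i) (h1 i))
  · rintro ⟨-, hc⟩
    replace hc := Finsupp.mem_supported _ _ |>.1 (Submodule.mem_comap.1 hc)
    have key : ∀ i : Fin p, pathBoundary V ℤ 2 (single ![u, v i, w] 1) =
        single ![v i, w] 1 - single ![u, w] 1 + single ![u, v i] 1 :=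
      fun i => boundary2_single V ℤ u (v i) w (huv i) (hvw i) hneq 1
    have hval : (pathBoundary V ℤ 2 (∑ i : Fin p, single ![u, v i, w] (1:ℤ))) ![u,w]
        = -(p : ℤ) := by
      rw [map_sum]
      simp only [key]
      rw [Finsupp.finset_sum_apply]
      have : ∀ i : Fin p, ((single ![v i, w] (1:ℤ) - single ![u, w] 1 + single ![u, v i] 1 :
          (Fin 2 → V) →₀ ℤ)) ![u,w] = -1 := by
        intro i
        rw [Finsupp.add_apply, Finsupp.sub_apply,
          Finsupp.single_eq_of_ne' (pair_ne_left ((huv i).symm)),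
          Finsupp.single_eq_of_ne' (pair_ne_right (hvw i)),
          Finsupp.single_eq_same]
        ring
      rw [Finset.sum_congr rfl fun i _ => this i]
      simp
    have hmem : ![u,w] ∈ (pathBoundary V ℤ 2 (∑ i : Fin p, single ![u, v i, w] (1:ℤ))).support := by
      rw [Finsupp.mem_support_iff, hval]
      simp [hp.ne_zero]
    have hAL : IsAllowedLow V E 2 ![u,w] := hc hmem
    exact huw (hAL 0)
end
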